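/- With (L, [·,·], ρ) and (L', [·,·]', ρ') a dual pair of Lie–Rinehart algebras over R, the expression E is tensorial (R-linear) in its second argument: E(a, g•α)(f) = g·E(a,α)(f) for all a ∈ L, α ∈ L' and f, g ∈ R. -/

import Mathlib

/-- A Lie–Rinehart algebra over a commutative `ℝ`-algebra `R`. -/
structure LieRinehart (R : Type*) [CommRing R] [Algebra ℝ R]
    (L : Type*) [AddCommGroup L] [Module R L] where
  bracket : L → L → L
  bracket_add_left : ∀ x y z : L, bracket (x + y) z = bracket x z + bracket y z
  bracket_add_right : ∀ x y z : L, bracket x (y + z) = bracket x y + bracket x z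
  bracket_real_left : ∀ (r : ℝ) (x y : L),
    bracket ((algebraMap ℝ R r) • x) y = (algebraMap ℝ R r) • bracket x y
  bracket_real_right : ∀ (r : ℝ) (x y : L),
    bracket x ((algebraMap ℝ R r) • y) = (algebraMap ℝ R r) • bracket x y
  bracket_antisymm : ∀ x y : L, bracket x y = - bracket y x
  bracket_jacobi : ∀ x y z : L,
    bracket x (bracket y z) = bracket (bracket x y) z + bracket y (bracket x z)
  anchor : L →ₗ[R] Derivation ℝ R R
  anchor_bracket : ∀ x y : L, anchor (bracket x y) = ⁅anchor x, anchor y⁆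
  leibniz : ∀ (f : R) (x y : L),
    bracket x (f • y) = f • bracket x y + (anchor x f) • y

/-- A dual pair of Lie–Rinehart algebras over `R`: two Lie–Rinehart algebras `L`, `L'`
with a nondegenerate `R`-bilinear pairing, Lie derivative operators `𝓛 : L × L' → L'`
and `𝓛 : L' × L → L` characterized by the usual formulas, and a map `d : R → L'`
characterized by `⟨a, d f⟩ = ρ(a)(f)`. -/
structure LieRinehartDualPair (R : Type*) [CommRing R] [Algebra ℝ R]
    (L L' : Type*) [AddCommGroup L] [Module R L] [AddCommGroup L'] [Module R L'] where
  lr : LieRinehart R L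
  lr' : LieRinehart R L'
  pair : L →ₗ[R] L' →ₗ[R] R
  nondeg_left : ∀ a : L, (∀ α : L', pair a α = 0) → a = 0
  nondeg_right : ∀ α : L', (∀ a : L, pair a α = 0) → α = 0
  lie : L → L' → L'
  lie' : L' → L → L
  lie_spec : ∀ (a a' : L) (α : L'),
    pair a' (lie a α) = lr.anchor a (pair a' α) - pair (lr.bracket a a') α
  lie'_spec : ∀ (α α' : L') (a : L),
    pair (lie' α a) α' = lr'.anchor α (pair a α') - pair a (lr'.bracket α α')
  d : R → L'
  d_spec : ∀ (a : L) (f : R), pair a (d f) = lr.anchor a f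

variable {R : Type*} [CommRing R] [Algebra ℝ R]
variable {L L' : Type*} [AddCommGroup L] [Module R L] [AddCommGroup L'] [Module R L']

/-- `(δa)(α₁,α₂) = ρ'(α₁)⟨a,α₂⟩ − ρ'(α₂)⟨a,α₁⟩ − ⟨a,[α₁,α₂]'⟩`. -/
def LieRinehartDualPair.delta (P : LieRinehartDualPair R L L') (a : L) (α₁ α₂ : L') : R :=
  P.lr'.anchor α₁ (P.pair a α₂) - P.lr'.anchor α₂ (P.pair a α₁)
    - P.pair a (P.lr'.bracket α₁ α₂)

/-- `[δa₁, a₂](α₁,α₂) = −ρ(a₂)((δa₁)(α₁,α₂)) + (δa₁)(𝓛_{a₂}α₁, α₂) + (δa₁)(α₁, 𝓛_{a₂}α₂)`. -/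
def LieRinehartDualPair.deltaBracket (P : LieRinehartDualPair R L L')
    (a₁ a₂ : L) (α₁ α₂ : L') : R :=
  - P.lr.anchor a₂ (P.delta a₁ α₁ α₂) + P.delta a₁ (P.lie a₂ α₁) α₂
    + P.delta a₁ α₁ (P.lie a₂ α₂)

/-- The bialgebroid defect
`D(a₁,a₂)(α₁,α₂) = (δ[a₁,a₂])(α₁,α₂) − [δa₁,a₂](α₁,α₂) − [a₁,δa₂](α₁,α₂)`,
where `[a₁, δa₂] = −[δa₂, a₁]`. -/
def LieRinehartDualPair.D (P : LieRinehartDualPair R L L') (a₁ a₂ : L) (α₁ α₂ : L') : R :=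
  P.delta (P.lr.bracket a₁ a₂) α₁ α₂ - P.deltaBracket a₁ a₂ α₁ α₂
    + P.deltaBracket a₂ a₁ α₁ α₂

/-- `E(a,α)(f) = [ρ(a),ρ'(α)](f) − ρ'(𝓛_a α)(f) + ρ(𝓛_α a)(f) − ρ'(d f)(⟨a,α⟩)`. -/
def LieRinehartDualPair.E (P : LieRinehartDualPair R L L') (a : L) (α : L') (f : R) : R :=
  ⁅P.lr.anchor a, P.lr'.anchor α⁆ f - P.lr'.anchor (P.lie a α) f
    + P.lr.anchor (P.lie' α a) f - P.lr'.anchor (P.d f) (P.pair a α)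

/-! Multiplying `α` by `g` changes each of the four terms of `E(a, α)(f)` by `g` times itself
plus a first-order term in `g`: the commutator and `ρ'(𝓛_a α)` each pick up
`ρ(a)(g) ρ'(α)(f)`, while `ρ(𝓛_α a)(f) = ⟨𝓛_α a, d f⟩` and `ρ'(d f)⟨a, α⟩` each pick up
`ρ'(d f)(g) ⟨a, α⟩`. These cancel in pairs in the alternating sum. -/

theorem Derivation.commutator_smul_right {k A : Type*} [CommRing k] [CommRing A] [Algebra k A]
    (D₁ D₂ : Derivation k A A) (g : A) :
    ⁅D₁, g • D₂⁆ = D₁ g • D₂ + g • ⁅D₁, D₂⁆ := by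
  ext f
  simp only [commutator_apply, add_apply, smul_apply, leibniz, smul_eq_mul]
  ring

theorem LieRinehart.bracket_smul_left (LR : LieRinehart R L) (g : R) (x y : L) :
    LR.bracket (g • x) y = g • LR.bracket x y - LR.anchor y g • x := by
  rw [LR.bracket_antisymm, LR.leibniz, LR.bracket_antisymm y x]
  module

namespace LieRinehartDualPair

variable (P : LieRinehartDualPair R L L')

theorem lie_smul (a : L) (g : R) (α : L') :
    P.lie a (g • α) = g • P.lie a α + P.lr.anchor a g • α := by
  rw [← sub_eq_zero]
  refine P.nondeg_right _ fun b => ?_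
  have hgα := P.lie_spec a b (g • α)
  have hα := P.lie_spec a b α
  have hρ := (P.lr.anchor a).leibniz g (P.pair b α)
  simp only [map_smul, smul_eq_mul, map_sub, map_add] at hgα hρ ⊢
  linear_combination hgα - g * hα + hρ

theorem pair_lie'_smul (g : R) (α β : L') (a : L) :
    P.pair (P.lie' (g • α) a) β
      = g * P.pair (P.lie' α a) β + P.lr'.anchor β g * P.pair a α := by
  simp only [P.lie'_spec, P.lr'.bracket_smul_left, map_smul, map_sub, Derivation.smul_apply,
    smul_eq_mul]
  ring

theorem anchor_lie'_smul (g : R) (α : L') (a : L) (f : R) :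
    P.lr.anchor (P.lie' (g • α) a) f
      = g * P.lr.anchor (P.lie' α a) f + P.lr'.anchor (P.d f) g * P.pair a α := by
  simp only [← P.d_spec, pair_lie'_smul]

end LieRinehartDualPair

/-- `E` is tensorial (`R`-linear) in its second argument. -/
theorem E_tensorial_second
    (P : LieRinehartDualPair R L L') :
    ∀ (a : L) (α : L') (f g : R),
      P.E a (g • α) f = g * P.E a α f := by
  intro a α f g
  have hpair : P.pair a (g • α) = g * P.pair a α := by rw [map_smul, smul_eq_mul]
  simp only [LieRinehartDualPair.E, P.anchor_lie'_smul, P.lie_smul, hpair, map_smul, map_add,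
    Derivation.commutator_smul_right, Derivation.add_apply, Derivation.smul_apply,
    Derivation.leibniz, smul_eq_mul]
  ring
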